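/- arXiv:1408.2947 — 2 statements merged into one kernel-verified Lean document; each statement's English description precedes it below -/
import Mathlib

section
/- Let j_0 = j_0(α) be a positive integer constant and c ∈ (1/2,1) be such that R_{j_0} = R e^{−α^{j_0}/2} = cR; let T be the largest integer with c − (T/2)(1−c)(1−α) > 1/2, and set R'_0 = cR and R'_i = R(c − (i/2)(1−c)(1−α)) for 1 ≤ i ≤ T. Then there exist a constant γ ∈ (0,1) and n₀ ∈ ℕ such that for all n ≥ n₀: (i) for every integer 1 ≤ j ≤ T−1 and every point Q with R'_j < r_Q ≤ R'_{j−1}, μ(B_Q(R) ∩ (B_O(R'_j) \ B_O(R'_{j+1}))) ≥ n^{−γ}; and (ii) for every point Q with R'_T < r_Q ≤ R'_{T−1}, μ(B_Q(R) ∩ B_O(R/2)) ≥ n^{−γ}. Consequently, in each case the probability that none of the n i.i.d. μ-distributed random vertices lies in the corresponding region is at most e^{−n^{1−γ}/2}. -/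
open Real MeasureTheory Filter

noncomputable def coshDist (p q : ℝ × ℝ) : ℝ :=
  Real.cosh p.1 * Real.cosh q.1 - Real.sinh p.1 * Real.sinh q.1 * Real.cos (p.2 - q.2)

lemma coshDist_symm (p q : ℝ × ℝ) : coshDist p q = coshDist q p := by
  unfold coshDist
  rw [mul_comm (Real.cosh p.1) (Real.cosh q.1), mul_comm (Real.sinh p.1) (Real.sinh q.1),
    ← Real.cos_neg, neg_sub]

noncomputable def RHG {V : Type} (Rr : ℝ) (x : V → ℝ × ℝ) : SimpleGraph V where
  Adj i j := i ≠ j ∧ coshDist (x i) (x j) ≤ Real.cosh Rr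
  symm := by
    constructor
    intro i j h
    exact ⟨h.1.symm, by rw [coshDist_symm]; exact h.2⟩
  loopless := by
    constructor
    intro i h
    exact h.1 rfl

noncomputable def dens (α Rr : ℝ) (p : ℝ × ℝ) : ℝ :=
  if 0 ≤ p.1 ∧ p.1 < Rr ∧ 0 ≤ p.2 ∧ p.2 < 2 * Real.pi then
    α * Real.sinh (α * p.1) / (2 * Real.pi * (Real.cosh (α * Rr) - 1))
  else 0

noncomputable def hypMeasure (α Rr : ℝ) : Measure (ℝ × ℝ) :=
  volume.withDensity (fun p => ENNReal.ofReal (dens α Rr p))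

noncomputable def mes (α Rr : ℝ) (S : Set (ℝ × ℝ)) : ℝ := (hypMeasure α Rr S).toReal

noncomputable def sampleMeasure (α Rr : ℝ) (n : ℕ) : Measure (Fin n → ℝ × ℝ) :=
  volume.withDensity (fun x => ∏ i, ENNReal.ofReal (dens α Rr (x i)))

noncomputable def Rn (C : ℝ) (n : ℕ) : ℝ := 2 * Real.log n + C

noncomputable def hBall (p : ℝ × ℝ) (ρ : ℝ) : Set (ℝ × ℝ) := {q | coshDist p q ≤ Real.cosh ρ}

noncomputable def origin : ℝ × ℝ := (0, 0)

noncomputable def C0 (α : ℝ) : ℝ := 2 / (1/2 - 3/4 * α + α ^ 2 / 4)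

noncomputable def Ri (α Rr : ℝ) (i : ℕ) : ℝ :=
  if i = 0 then Rr / 2 else Rr * Real.exp (-(α ^ i) / 2)

noncomputable def i0 (α C : ℝ) (n : ℕ) : ℕ :=
  sInf {i : ℕ | α ^ i ≤ 2 * C0 α * Real.log (Rn C n) / Rn C n}

noncomputable def angDist (a b : ℝ) : ℝ := min |a - b| (2 * Real.pi - |a - b|)

def validPoint (Rr : ℝ) (p : ℝ × ℝ) : Prop :=
  0 ≤ p.1 ∧ p.1 < Rr ∧ 0 ≤ p.2 ∧ p.2 < 2 * Real.pi

def extendPt {n : ℕ} (q : ℝ × ℝ) (x : Fin n → ℝ × ℝ) : Option (Fin n) → ℝ × ℝ :=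
  fun v => v.elim q x

/-- The modified bands `R'_i = R(c - (i/2)(1-c)(1-α))`, with real index `i`. -/
noncomputable def Rp (α C cc : ℝ) (n : ℕ) (i : ℝ) : ℝ :=
  Rn C n * (cc - i / 2 * (1 - cc) * (1 - α))

/-!
Let `s = (1 - c)(1 - α)/2`, so that `R'_i - R'_{i+1} = s R`. Writing
`cosh d(Q, p) = cosh (r_Q - r_p) + sinh r_Q sinh r_p (1 - cos (θ_Q - θ_p))`, one sees that if
`r_Q ≤ w`, `r_p ≤ v` and `4 e^w, 4 e^v ≤ e^R`, then `p ∈ B_Q(R)` as soon as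
`|θ_Q - θ_p| ≤ e^{(R - w - v)/2}`. So `B_Q(R)` contains a polar box `(u, v] × (θ₁, θ₂]` of
angular width `e^{(R - w - v)/2}`, whose `μ`-measure is at least
`e^{α (v - R) + (R - w - v)/2} / (8π)` once `α (v - u) ≥ 3`.
For `(u, v, w) = (R'_{j+1}, R'_j, R'_{j-1})`, and for `(R/4, R/2, R'_{T-1})`, this exponent is at
least `-(1 - 2s) R / 2`, and `e^{-(1 - 2s) R / 2} = Θ(n^{-(1 - 2s)})`, which beats `n^{-γ}` for
`γ = 1 - s`. Finally `n` independent points all avoid a set of measure `p` with probability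
`(1 - p)^n ≤ e^{-n p}`.
-/

open Set

theorem lintegral_fin_nat_prod_eq_prod {E : Type*} [MeasurableSpace E] {n : ℕ}
    {μ : Fin n → Measure E} [∀ i, SigmaFinite (μ i)] {f : Fin n → E → ENNReal}
    (hf : ∀ i, Measurable (f i)) :
    ∫⁻ x, ∏ i, f i (x i) ∂(Measure.pi μ) = ∏ i, ∫⁻ x, f i x ∂(μ i) := by
  induction n with
  | zero => simp
  | succ n ih =>
    calc
      _ = ∫⁻ x : E × (Fin n → E),
          f 0 x.1 * ∏ i : Fin n, f (Fin.succ i) (x.2 i)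
          ∂((μ 0).prod (Measure.pi (fun i ↦ μ i.succ))) := by
        rw [← ((measurePreserving_piFinSuccAbove μ 0).symm).lintegral_comp_emb
          (MeasurableEquiv.measurableEmbedding _)]
        simp_rw [MeasurableEquiv.piFinSuccAbove_symm_apply, Fin.insertNthEquiv,
          Fin.prod_univ_succ, Fin.insertNth_zero, Equiv.coe_fn_mk, Fin.cons_succ,
          Fin.zero_succAbove, cast_eq, Fin.cons_zero]
      _ = (∫⁻ x, f 0 x ∂μ 0) * ∏ i : Fin n, ∫⁻ x, f (Fin.succ i) x ∂(μ i.succ) := by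
        rw [← ih fun i => hf i.succ, ← lintegral_prod_mul (hf 0).aemeasurable
          (Finset.measurable_prod _ fun i _ =>
            (hf i.succ).comp (measurable_pi_apply i)).aemeasurable]
      _ = ∏ i, ∫⁻ x, f i x ∂(μ i) := by rw [Fin.prod_univ_succ]

lemma four_mul_exp_le_exp {x y : ℝ} (hxy : 3 ≤ y - x) : 4 * exp x ≤ exp y := by
  have := add_one_le_exp (y - x)
  rw [show exp y = exp x * exp (y - x) by rw [← exp_add]; ring_nf]
  nlinarith [exp_pos x]

lemma exp_div_four_le_cosh_sub_cosh {x y : ℝ} (hx : 0 ≤ x) (hxy : 3 ≤ y - x) :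
    exp y / 4 ≤ cosh y - cosh x := by
  have hgap := four_mul_exp_le_exp hxy
  rw [cosh_eq, cosh_eq]
  linarith [exp_pos (-y), exp_le_one_iff.2 (neg_nonpos.2 hx), one_le_exp hx]

lemma exists_Ioc_subset_Icc_of_mem_Ico {θ Δ : ℝ} (hθ : θ ∈ Ico 0 (2 * π)) (hΔ : 0 ≤ Δ)
    (hΔπ : Δ ≤ π) :
    ∃ θ₁ θ₂, 0 ≤ θ₁ ∧ θ₂ < 2 * π ∧ θ₂ - θ₁ = Δ ∧ Ioc θ₁ θ₂ ⊆ Icc (θ - Δ) (θ + Δ) := by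
  by_cases h : θ + Δ < 2 * π
  · exact ⟨θ, θ + Δ, hθ.1, h, by ring, fun t ht => ⟨by linarith [ht.1], ht.2⟩⟩
  · exact ⟨θ - Δ, θ, by linarith, hθ.2, by ring, fun t ht => ⟨ht.1.le, by linarith [ht.2]⟩⟩

section HypMeasure

variable {α R : ℝ}

instance : SigmaFinite (hypMeasure α R) := SigmaFinite.withDensity_ofReal _

lemma dens_eq_indicator (α R : ℝ) :
    dens α R = (Ico 0 R ×ˢ Ico 0 (2 * π)).indicator
      fun p => α * sinh (α * p.1) / (2 * π * (cosh (α * R) - 1)) := by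
  ext p
  simp only [dens, indicator, mem_prod, mem_Ico, and_assoc]

lemma measurable_dens (α R : ℝ) : Measurable (dens α R) := by
  rw [dens_eq_indicator]
  exact Measurable.indicator (by fun_prop)
    (measurableSet_Ico.prod measurableSet_Ico)

lemma hypMeasure_prod {s t : Set ℝ} (hs : MeasurableSet s) (ht : MeasurableSet t)
    (hsR : s ⊆ Ico 0 R) (ht2π : t ⊆ Ico 0 (2 * π)) :
    hypMeasure α R (s ×ˢ t) =
      (∫⁻ r in s, ENNReal.ofReal (α * sinh (α * r) / (2 * π * (cosh (α * R) - 1)))) *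
        volume t := by
  have hst : MeasurableSet (s ×ˢ t) := hs.prod ht
  rw [hypMeasure, withDensity_apply _ hst, dens_eq_indicator,
    setLIntegral_congr_fun hst fun p hp => by rw [indicator_of_mem (prod_mono hsR ht2π hp)],
    Measure.volume_eq_prod, ← Measure.prod_restrict]
  simpa using lintegral_prod_mul (μ := volume.restrict s) (ν := volume.restrict t)
    (f := fun r => ENNReal.ofReal (α * sinh (α * r) / (2 * π * (cosh (α * R) - 1))))
    (g := fun _ => 1) (by fun_prop) aemeasurable_const

lemma lintegral_Ioc_sinh {D a b : ℝ} (hα : 0 ≤ α) (hD : 0 ≤ D) (ha : 0 ≤ a) (hab : a ≤ b) :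
    ∫⁻ r in Ioc a b, ENNReal.ofReal (α * sinh (α * r) / D) =
      ENNReal.ofReal ((cosh (α * b) - cosh (α * a)) / D) := by
  have hderiv : ∀ r ∈ uIcc a b, HasDerivAt (fun r => cosh (α * r) / D) (α * sinh (α * r) / D) r :=
    fun r _ => by
      simpa [mul_comm] using (((hasDerivAt_id r).const_mul α).cosh).div_const D
  rw [← ofReal_integral_eq_lintegral_ofReal (by fun_prop : Continuous _).integrableOn_Ioc,
    ← intervalIntegral.integral_of_le hab,
    intervalIntegral.integral_eq_sub_of_hasDerivAt hderiv
      ((by fun_prop : Continuous _).intervalIntegrable _ _), sub_div]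
  filter_upwards [ae_restrict_mem measurableSet_Ioc] with r hr
  have : 0 ≤ sinh (α * r) := sinh_nonneg_iff.2 (mul_nonneg hα (ha.trans hr.1.le))
  positivity

lemma two_pi_mul_cosh_sub_one_pos (hα : 0 < α) (hR : 0 < R) : 0 < 2 * π * (cosh (α * R) - 1) :=
  mul_pos two_pi_pos (sub_pos.2 (one_lt_cosh.2 (mul_pos hα hR).ne'))

lemma hypMeasure_Ioc_prod_Ioc (hα : 0 < α) (hR : 0 < R) {u v θ₁ θ₂ : ℝ} (hu : 0 ≤ u) (huv : u ≤ v)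
    (hvR : v < R) (hθ₁ : 0 ≤ θ₁) (hθ₁₂ : θ₁ ≤ θ₂) (hθ₂ : θ₂ < 2 * π) :
    mes α R (Ioc u v ×ˢ Ioc θ₁ θ₂) =
      (cosh (α * v) - cosh (α * u)) / (2 * π * (cosh (α * R) - 1)) * (θ₂ - θ₁) := by
  have hD := two_pi_mul_cosh_sub_one_pos hα hR
  have hcosh : cosh (α * u) ≤ cosh (α * v) := by
    rw [cosh_le_cosh, abs_of_nonneg (by positivity), abs_of_nonneg (by nlinarith)]
    exact mul_le_mul_of_nonneg_left huv hα.le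
  rw [mes, hypMeasure_prod measurableSet_Ioc measurableSet_Ioc
      (fun r hr => ⟨hu.trans hr.1.le, hr.2.trans_lt hvR⟩)
      (fun θ hθ => ⟨hθ₁.trans hθ.1.le, hθ.2.trans_lt hθ₂⟩),
    lintegral_Ioc_sinh hα.le hD.le hu huv, Real.volume_Ioc, ENNReal.toReal_mul,
    ENNReal.toReal_ofReal (div_nonneg (sub_nonneg.2 hcosh) hD.le),
    ENNReal.toReal_ofReal (sub_nonneg.2 hθ₁₂)]

lemma isProbabilityMeasure_hypMeasure (hα : 0 < α) (hR : 0 < R) :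
    IsProbabilityMeasure (hypMeasure α R) := by
  have hbox : MeasurableSet (Ico 0 R ×ˢ Ico 0 (2 * π)) := measurableSet_Ico.prod measurableSet_Ico
  have hD := two_pi_mul_cosh_sub_one_pos hα hR
  have huniv : hypMeasure α R univ = hypMeasure α R (Ico 0 R ×ˢ Ico 0 (2 * π)) := by
    rw [hypMeasure, withDensity_apply _ MeasurableSet.univ, withDensity_apply _ hbox,
      Measure.restrict_univ, ← lintegral_indicator hbox]
    congr 1
    ext p
    rw [dens_eq_indicator]
    by_cases hp : p ∈ Ico 0 R ×ˢ Ico 0 (2 * π) <;> simp [hp]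
  constructor
  rw [huniv, hypMeasure_prod measurableSet_Ico measurableSet_Ico subset_rfl subset_rfl,
    setLIntegral_congr Ico_ae_eq_Ioc, lintegral_Ioc_sinh hα.le hD.le le_rfl hR.le,
    Real.volume_Ico, mul_zero, cosh_zero, sub_zero,
    ← ENNReal.ofReal_mul (div_nonneg (by linarith [one_le_cosh (α * R)]) hD.le)]
  rw [div_mul_eq_mul_div, mul_comm, div_self hD.ne', ENNReal.ofReal_one]

end HypMeasure

lemma sampleMeasure_eq_pi (α R : ℝ) (n : ℕ) :
    sampleMeasure α R n = Measure.pi fun _ => hypMeasure α R := by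
  refine (Measure.pi_eq fun s hs => ?_).symm
  rw [sampleMeasure, withDensity_apply _ (MeasurableSet.univ_pi hs), volume_pi,
    Measure.restrict_pi_pi,
    lintegral_fin_nat_prod_eq_prod (f := fun _ p => ENNReal.ofReal (dens α R p))
      fun _ => (measurable_dens α R).ennreal_ofReal]
  exact Finset.prod_congr rfl fun i _ => (withDensity_apply _ (hs i)).symm

lemma sampleMeasure_forall_notMem (α R : ℝ) (n : ℕ) (S : Set (ℝ × ℝ)) :
    sampleMeasure α R n {x | ∀ i, x i ∉ S} = hypMeasure α R Sᶜ ^ n := by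
  have : {x : Fin n → ℝ × ℝ | ∀ i, x i ∉ S} = univ.pi fun _ => Sᶜ := by ext; simp
  rw [this, sampleMeasure_eq_pi, Measure.pi_pi, Finset.prod_const, Finset.card_univ,
    Fintype.card_fin]

lemma sampleMeasure_forall_notMem_le {α R : ℝ} (hα : 0 < α) (hR : 0 < R) {S : Set (ℝ × ℝ)}
    (hS : MeasurableSet S) (n : ℕ) :
    (sampleMeasure α R n {x | ∀ i, x i ∉ S}).toReal ≤ exp (-(n * mes α R S)) := by
  have := isProbabilityMeasure_hypMeasure hα hR
  have hcompl : (hypMeasure α R Sᶜ).toReal = 1 - mes α R S := by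
    rw [mes, ← measureReal_def, ← measureReal_def, probReal_compl_eq_one_sub hS]
  rw [sampleMeasure_forall_notMem, ENNReal.toReal_pow, hcompl, ← mul_neg, exp_nat_mul]
  exact pow_le_pow_left₀ (sub_nonneg.2 measureReal_le_one) (one_sub_le_exp_neg _) n

lemma sampleMeasure_forall_notMem_le_of_rpow_le {α R γ : ℝ} (hα : 0 < α) (hR : 0 < R)
    {S : Set (ℝ × ℝ)} (hS : MeasurableSet S) {n : ℕ} (hn : 0 < n)
    (hγ : (n : ℝ) ^ (-γ) ≤ mes α R S) :
    (sampleMeasure α R n {x | ∀ i, x i ∉ S}).toReal ≤ exp (-(n : ℝ) ^ (1 - γ) / 2) := by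
  have hn' : (0 : ℝ) < n := Nat.cast_pos.2 hn
  have hpow : (n : ℝ) ^ (1 - γ) = n * (n : ℝ) ^ (-γ) := by
    rw [sub_eq_neg_add, rpow_add hn', rpow_one, mul_comm]
  refine (sampleMeasure_forall_notMem_le hα hR hS n).trans (exp_le_exp.2 ?_)
  have := mul_le_mul_of_nonneg_left hγ hn'.le
  have := rpow_nonneg hn'.le (1 - γ)
  linarith

lemma measurableSet_hBall (P : ℝ × ℝ) (ρ : ℝ) : MeasurableSet (hBall P ρ) :=
  measurableSet_le (by unfold coshDist; fun_prop) measurable_const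

lemma coshDist_eq (Q p : ℝ × ℝ) :
    coshDist Q p = cosh (Q.1 - p.1) + sinh Q.1 * sinh p.1 * (1 - cos (Q.2 - p.2)) := by
  rw [coshDist, cosh_sub]; ring

lemma coshDist_le_cosh {R w v : ℝ} {Q p : ℝ × ℝ} (hQ : 0 ≤ Q.1) (hQw : Q.1 ≤ w) (hp : 0 ≤ p.1)
    (hpv : p.1 ≤ v) (hw : 4 * exp w ≤ exp R) (hv : 4 * exp v ≤ exp R)
    (hθ : |Q.2 - p.2| ≤ exp ((R - w - v) / 2)) :
    coshDist Q p ≤ cosh R := by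
  have hradial : cosh (Q.1 - p.1) ≤ exp R / 4 := by
    rw [cosh_eq]
    have := exp_le_exp.2 (show Q.1 - p.1 ≤ w by linarith)
    have := exp_le_exp.2 (show -(Q.1 - p.1) ≤ v by linarith)
    linarith
  have hsinhQ : sinh Q.1 ≤ exp w / 2 := by
    rw [sinh_eq]; linarith [exp_pos (-Q.1), exp_le_exp.2 hQw]
  have hsinhp : sinh p.1 ≤ exp v / 2 := by
    rw [sinh_eq]; linarith [exp_pos (-p.1), exp_le_exp.2 hpv]
  have hangular : 1 - cos (Q.2 - p.2) ≤ exp (R - w - v) / 2 := by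
    have hsq : (Q.2 - p.2) ^ 2 ≤ exp (R - w - v) := by
      rw [← sq_abs, show exp (R - w - v) = exp ((R - w - v) / 2) ^ 2 by
        rw [sq, ← exp_add, add_halves]]
      exact pow_le_pow_left₀ (abs_nonneg _) hθ 2
    linarith [one_sub_sq_div_two_le_cos (x := Q.2 - p.2)]
  have hprod : sinh Q.1 * sinh p.1 * (1 - cos (Q.2 - p.2)) ≤ exp R / 8 := by
    calc _ ≤ exp w / 2 * (exp v / 2) * (exp (R - w - v) / 2) :=
          mul_le_mul (mul_le_mul hsinhQ hsinhp (sinh_nonneg_iff.2 hp) (by positivity)) hangular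
            (by linarith [cos_le_one (Q.2 - p.2)]) (by positivity)
      _ = exp R / 8 := by
        rw [show exp R = exp w * exp v * exp (R - w - v) by rw [← exp_add, ← exp_add]; ring_nf]
        ring
  have hcosh : exp R / 2 ≤ cosh R := by rw [cosh_eq]; linarith [exp_pos (-R)]
  rw [coshDist_eq]
  linarith [exp_pos R]

lemma exp_div_mul_le_mes_Ioc_prod_Ioc {α R u v θ₁ θ₂ : ℝ} (hα : 0 < α) (hR : 0 < R) (hu : 0 ≤ u)
    (huv : 3 ≤ α * (v - u)) (hvR : v < R) (hθ₁ : 0 ≤ θ₁) (hθ₁₂ : θ₁ ≤ θ₂) (hθ₂ : θ₂ < 2 * π) :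
    exp (α * (v - R)) / (8 * π) * (θ₂ - θ₁) ≤ mes α R (Ioc u v ×ˢ Ioc θ₁ θ₂) := by
  have huv' : u ≤ v := by nlinarith
  rw [hypMeasure_Ioc_prod_Ioc hα hR hu huv' hvR hθ₁ hθ₁₂ hθ₂]
  refine mul_le_mul_of_nonneg_right ?_ (sub_nonneg.2 hθ₁₂)
  have hcoshR : cosh (α * R) - 1 ≤ exp (α * R) := by
    rw [cosh_eq]; linarith [exp_le_exp.2 (show -(α * R) ≤ α * R by nlinarith)]
  calc exp (α * (v - R)) / (8 * π) = exp (α * v) / 4 / (2 * π * exp (α * R)) := by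
        rw [mul_sub, exp_sub]; field_simp; ring
    _ ≤ (cosh (α * v) - cosh (α * u)) / (2 * π * (cosh (α * R) - 1)) := by
      have hnum := exp_div_four_le_cosh_sub_cosh (y := α * v) (mul_nonneg hα.le hu)
        (by linarith)
      exact div_le_div₀ (by linarith [exp_pos (α * v)]) hnum
        (two_pi_mul_cosh_sub_one_pos hα hR) (by gcongr)

lemma exp_div_le_mes_hBall_inter {α R u v w : ℝ} (hα : 0 < α) (hR : 0 < R) (hu : 0 ≤ u)
    (huv : 3 ≤ α * (v - u)) (hwv : R ≤ w + v) (hw : 4 * exp w ≤ exp R) (hv : 4 * exp v ≤ exp R)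
    {Q : ℝ × ℝ} (hQ : validPoint R Q) (hQw : Q.1 ≤ w) {W : Set (ℝ × ℝ)}
    (hW : ∀ p : ℝ × ℝ, u < p.1 → p.1 ≤ v → p ∈ W) :
    exp (α * (v - R) + (R - w - v) / 2) / (8 * π) ≤ mes α R (hBall Q R ∩ W) := by
  have := isProbabilityMeasure_hypMeasure hα hR
  have hvR : v < R := by
    by_contra! h
    linarith [exp_le_exp.2 h, exp_pos R]
  have hΔ : exp ((R - w - v) / 2) ≤ π :=
    (exp_le_one_iff.2 (by linarith)).trans (by linarith [pi_gt_three])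
  obtain ⟨θ₁, θ₂, hθ₁, hθ₂, hwidth, hnear⟩ :=
    exists_Ioc_subset_Icc_of_mem_Ico ⟨hQ.2.2.1, hQ.2.2.2⟩ (exp_pos _).le hΔ
  have hrect : Ioc u v ×ˢ Ioc θ₁ θ₂ ⊆ hBall Q R ∩ W := by
    rintro p ⟨hpr, hpθ⟩
    refine ⟨coshDist_le_cosh hQ.1 hQw (hu.trans hpr.1.le) hpr.2 hw hv ?_, hW p hpr.1 hpr.2⟩
    obtain ⟨h₁, h₂⟩ := hnear hpθ
    exact abs_sub_le_iff.2 ⟨by linarith, by linarith⟩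
  calc exp (α * (v - R) + (R - w - v) / 2) / (8 * π)
      = exp (α * (v - R)) / (8 * π) * (θ₂ - θ₁) := by rw [hwidth, exp_add]; ring
    _ ≤ mes α R (Ioc u v ×ˢ Ioc θ₁ θ₂) :=
      exp_div_mul_le_mes_Ioc_prod_Ioc hα hR hu huv hvR hθ₁
        (by linarith [exp_pos ((R - w - v) / 2)]) hθ₂
    _ ≤ mes α R (hBall Q R ∩ W) := measureReal_mono hrect

lemma exp_neg_mul_div_le_mes_hBall_inter {α R s c β a b ω : ℝ} (hα : 0 < α) (hR : 0 < R)
    (hRc : 3 ≤ R * (1 - c)) (hRs : 3 ≤ α * R * s) (ha : 0 ≤ a) (hab : s ≤ b - a) (hbc : b ≤ c)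
    (hωc : ω ≤ c) (hωb : 1 ≤ ω + b) (hβ : -β / 2 ≤ α * (b - 1) + (1 - ω - b) / 2)
    {Q : ℝ × ℝ} (hQ : validPoint R Q) (hQω : Q.1 ≤ R * ω) {W : Set (ℝ × ℝ)}
    (hW : ∀ p : ℝ × ℝ, R * a < p.1 → p.1 ≤ R * b → p ∈ W) :
    exp (-(β * R) / 2) / (8 * π) ≤ mes α R (hBall Q R ∩ W) := by
  have hexp_le {x : ℝ} (hx : x ≤ c) : 4 * exp (R * x) ≤ exp R :=
    four_mul_exp_le_exp (by nlinarith)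
  refine le_trans ?_ (exp_div_le_mes_hBall_inter hα hR (mul_nonneg hR.le ha) ?_ ?_
    (hexp_le hωc) (hexp_le hbc) hQ hQω hW)
  · gcongr
    nlinarith
  · nlinarith [mul_le_mul_of_nonneg_left hab (mul_pos hα hR).le]
  · nlinarith

lemma mem_hBall_origin {ρ : ℝ} {p : ℝ × ℝ} : p ∈ hBall origin ρ ↔ |p.1| ≤ |ρ| := by
  simp [hBall, origin, coshDist, cosh_le_cosh]

lemma mem_hBall_origin_diff {u v : ℝ} {p : ℝ × ℝ} (hu : 0 ≤ u) (hup : u < p.1) (hpv : p.1 ≤ v) :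
    p ∈ hBall origin v \ hBall origin u := by
  have hp : 0 ≤ p.1 := hu.trans hup.le
  refine ⟨mem_hBall_origin.2 ?_, fun h => ?_⟩
  · rw [abs_of_nonneg hp]
    exact hpv.trans (le_abs_self v)
  · rw [mem_hBall_origin, abs_of_nonneg hp, abs_of_nonneg hu] at h
    linarith

section Bands

variable {α c s R : ℝ} {T : ℕ}

lemma exp_div_le_mes_hBall_inter_band (hα : 0 < α) (hα' : α < 1)
    (hs : 2 * s = (1 - c) * (1 - α)) (hR : 0 < R) (hRc : 3 ≤ R * (1 - c)) (hRs : 3 ≤ α * R * s)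
    (hT : 1 / 2 < c - T * s) {j : ℝ} (hj : 1 ≤ j) (hjT : j + 1 ≤ T) {Q : ℝ × ℝ}
    (hQ : validPoint R Q) (hQj : Q.1 ≤ R * (c - (j - 1) * s)) :
    exp (-((1 - 2 * s) * R) / 2) / (8 * π) ≤
      mes α R (hBall Q R ∩
        (hBall origin (R * (c - j * s)) \ hBall origin (R * (c - (j + 1) * s)))) := by
  have hs0 : 0 ≤ s := by nlinarith
  have hjs : (j + 1) * s ≤ T * s := mul_le_mul_of_nonneg_right hjT hs0
  have hjs' : 0 ≤ (1 - α) * (j * s) := by positivity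
  exact exp_neg_mul_div_le_mes_hBall_inter hα hR hRc hRs (by nlinarith) (by nlinarith)
    (by nlinarith) (by nlinarith) (by nlinarith) (by nlinarith) hQ hQj
    fun p hap hpb => mem_hBall_origin_diff (mul_nonneg hR.le (by nlinarith)) hap hpb

lemma exp_div_le_mes_hBall_inter_core (hα : 0 < α) (hα' : α < 1) (hc : 1 / 2 < c)
    (hs : 2 * s = (1 - c) * (1 - α)) (hR : 0 < R) (hRc : 3 ≤ R * (1 - c)) (hRs : 3 ≤ α * R * s)
    (hT1 : 1 ≤ T) (hT : 1 / 2 < c - T * s) (hT' : c - (T + 1) * s ≤ 1 / 2)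
    {Q : ℝ × ℝ} (hQ : validPoint R Q) (hQT : Q.1 ≤ R * (c - (T - 1) * s)) :
    exp (-((1 - 2 * s) * R) / 2) / (8 * π) ≤ mes α R (hBall Q R ∩ hBall origin (R / 2)) := by
  have hs0 : 0 ≤ s := by nlinarith
  have hT1' : (1 : ℝ) ≤ T := by exact_mod_cast hT1
  refine exp_neg_mul_div_le_mes_hBall_inter (a := 1 / 4) (b := 1 / 2) hα hR hRc hRs
    (by norm_num) (by nlinarith) (by linarith) (by nlinarith) (by nlinarith) (by nlinarith) hQ hQT
    fun p hap hpb => (mem_hBall_origin_diff (u := R / 4) (by positivity) (by linarith)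
      (by linarith)).1

end Bands

lemma tendsto_Rn_atTop (C : ℝ) : Tendsto (Rn C) atTop atTop :=
  tendsto_atTop_add_const_right _ C <|
    (tendsto_log_atTop.comp tendsto_natCast_atTop_atTop).const_mul_atTop two_pos

lemma eventually_rpow_neg_le_exp_Rn {β γ : ℝ} (hβγ : β < γ) (C : ℝ) :
    ∀ᶠ n : ℕ in atTop, (n : ℝ) ^ (-γ) ≤ exp (-(β * Rn C n) / 2) / (8 * π) := by
  have hlim := (tendsto_rpow_atTop (sub_pos.2 hβγ)).comp tendsto_natCast_atTop_atTop
  filter_upwards [hlim.eventually_ge_atTop (8 * π * exp (β * C / 2)), eventually_gt_atTop 0]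
    with n hgrowth hn
  have hn' : (0 : ℝ) < n := Nat.cast_pos.2 hn
  have hexp : exp (-(β * Rn C n) / 2) =
      (n : ℝ) ^ (-γ) * (n : ℝ) ^ (γ - β) / exp (β * C / 2) := by
    rw [← rpow_add hn', rpow_def_of_pos hn', Rn, ← exp_sub]
    ring_nf
  rw [hexp, div_div, le_div_iff₀ (by positivity)]
  gcongr
  exact (mul_comm _ _).trans_le hgrowth

theorem close_center_general (α C : ℝ) (hα : 1/2 < α) (hα' : α < 1)
    (c : ℝ) (hc1 : 1/2 < c) (hc2 : c < 1)
    (T : ℕ) (hT1 : 1 ≤ T)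
    (hT : 1/2 < c - (T : ℝ) / 2 * (1 - c) * (1 - α))
    (hT' : ¬ (1/2 < c - ((T : ℝ) + 1) / 2 * (1 - c) * (1 - α))) :
    ∃ γ : ℝ, 0 < γ ∧ γ < 1 ∧ ∃ n₀ : ℕ, ∀ n ≥ n₀,
      (∀ j : ℕ, 1 ≤ j → j ≤ T - 1 → ∀ Q : ℝ × ℝ, validPoint (Rn C n) Q →
        Rp α C c n j < Q.1 → Q.1 ≤ Rp α C c n ((j : ℝ) - 1) →
        (n : ℝ) ^ (-γ) ≤
          mes α (Rn C n) (hBall Q (Rn C n) ∩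
            (hBall origin (Rp α C c n j) \ hBall origin (Rp α C c n ((j : ℝ) + 1)))) ∧
        (sampleMeasure α (Rn C n) n
          {x : Fin n → ℝ × ℝ | ∀ i : Fin n,
            x i ∉ hBall Q (Rn C n) ∩
              (hBall origin (Rp α C c n j) \ hBall origin (Rp α C c n ((j : ℝ) + 1)))}).toReal
          ≤ Real.exp (-(n : ℝ) ^ (1 - γ) / 2)) ∧
      (∀ Q : ℝ × ℝ, validPoint (Rn C n) Q →
        Rp α C c n T < Q.1 → Q.1 ≤ Rp α C c n ((T : ℝ) - 1) →
        (n : ℝ) ^ (-γ) ≤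
          mes α (Rn C n) (hBall Q (Rn C n) ∩ hBall origin (Rn C n / 2)) ∧
        (sampleMeasure α (Rn C n) n
          {x : Fin n → ℝ × ℝ | ∀ i : Fin n,
            x i ∉ hBall Q (Rn C n) ∩ hBall origin (Rn C n / 2)}).toReal
          ≤ Real.exp (-(n : ℝ) ^ (1 - γ) / 2)) := by
  have hα0 : 0 < α := by linarith
  obtain ⟨s, hs⟩ : ∃ s, 2 * s = (1 - c) * (1 - α) := ⟨(1 - c) * (1 - α) / 2, by ring⟩
  have hs0 : 0 < s := by nlinarith
  have hfrac (i : ℝ) : c - i / 2 * (1 - c) * (1 - α) = c - i * s := by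
    linear_combination i / 2 * hs
  rw [hfrac] at hT
  rw [hfrac, not_lt] at hT'
  refine ⟨1 - s, by nlinarith, by linarith, ?_⟩
  have hRtop := tendsto_Rn_atTop C
  obtain ⟨n₀, hn₀⟩ := eventually_atTop.1 <|
    (eventually_rpow_neg_le_exp_Rn (show 1 - 2 * s < 1 - s by linarith) C).and <|
    ((hRtop.atTop_mul_const (sub_pos.2 hc2)).eventually_ge_atTop 3).and <|
    (((hRtop.const_mul_atTop hα0).atTop_mul_const hs0).eventually_ge_atTop 3).and <|
    eventually_gt_atTop 0
  refine ⟨n₀, fun n hn => ?_⟩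
  obtain ⟨hpow, hRc, hRs, hn⟩ := hn₀ n hn
  have hR : 0 < Rn C n := by nlinarith
  simp only [Rp, hfrac]
  refine ⟨fun j hj hjT Q hQ _ hQj => ?_, fun Q hQ _ hQT => ?_⟩
  · have h := hpow.trans <| exp_div_le_mes_hBall_inter_band hα0 hα' hs hR hRc hRs hT
      (by exact_mod_cast hj) (by exact_mod_cast (by omega : j + 1 ≤ T)) hQ hQj
    exact ⟨h, sampleMeasure_forall_notMem_le_of_rpow_le hα0 hR
      ((measurableSet_hBall _ _).inter ((measurableSet_hBall _ _).diff (measurableSet_hBall _ _)))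
      hn h⟩
  · have h := hpow.trans <|
      exp_div_le_mes_hBall_inter_core hα0 hα' hc1 hs hR hRc hRs hT1 hT hT' hQ hQT
    exact ⟨h, sampleMeasure_forall_notMem_le_of_rpow_le hα0 hR
      ((measurableSet_hBall _ _).inter (measurableSet_hBall _ _)) hn h⟩

/-- Vertices between the modified bands `R'_j` have, with probability
super-polynomially close to one, a neighbor in the next band (Lemma 3.5 of the paper). -/
theorem close_center (α C : ℝ) (hα : 1/2 < α) (hα' : α < 1)
    (j0 : ℕ) (hj0 : 1 ≤ j0)
    (hj0' : ∀ j : ℕ, j0 ≤ j → Real.exp (-(α ^ j) / 2) ≤ 1 - (1 - (1 - α)/2) * α ^ j / 2)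
    (c : ℝ) (hc : c = Real.exp (-(α ^ j0) / 2)) (hc1 : 1/2 < c) (hc2 : c < 1)
    (T : ℕ) (hT1 : 1 ≤ T)
    (hT : 1/2 < c - (T : ℝ) / 2 * (1 - c) * (1 - α))
    (hT' : ¬ (1/2 < c - ((T : ℝ) + 1) / 2 * (1 - c) * (1 - α))) :
    ∃ γ : ℝ, 0 < γ ∧ γ < 1 ∧ ∃ n₀ : ℕ, ∀ n ≥ n₀,
      (∀ j : ℕ, 1 ≤ j → j ≤ T - 1 → ∀ Q : ℝ × ℝ, validPoint (Rn C n) Q →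
        Rp α C c n j < Q.1 → Q.1 ≤ Rp α C c n ((j : ℝ) - 1) →
        (n : ℝ) ^ (-γ) ≤
          mes α (Rn C n) (hBall Q (Rn C n) ∩
            (hBall origin (Rp α C c n j) \ hBall origin (Rp α C c n ((j : ℝ) + 1)))) ∧
        (sampleMeasure α (Rn C n) n
          {x : Fin n → ℝ × ℝ | ∀ i : Fin n,
            x i ∉ hBall Q (Rn C n) ∩
              (hBall origin (Rp α C c n j) \ hBall origin (Rp α C c n ((j : ℝ) + 1)))}).toReal
          ≤ Real.exp (-(n : ℝ) ^ (1 - γ) / 2)) ∧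
      (∀ Q : ℝ × ℝ, validPoint (Rn C n) Q →
        Rp α C c n T < Q.1 → Q.1 ≤ Rp α C c n ((T : ℝ) - 1) →
        (n : ℝ) ^ (-γ) ≤
          mes α (Rn C n) (hBall Q (Rn C n) ∩ hBall origin (Rn C n / 2)) ∧
        (sampleMeasure α (Rn C n) n
          {x : Fin n → ℝ × ℝ | ∀ i : Fin n,
            x i ∉ hBall Q (Rn C n) ∩ hBall origin (Rn C n / 2)}).toReal
          ≤ Real.exp (-(n : ℝ) ^ (1 - γ) / 2)) :=
  close_center_general α C hα hα' c hc1 hc2 T hT1 hT hT'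
end

section
/- Let ξ > 0 be a constant. There exists n₀ ∈ ℕ such that for all n ≥ n₀ the following deterministic statement holds: any two points u, v with r_u > R − ξ, r_v > R − ξ and d(u,v) ≤ R satisfy |θ_u − θ_v| ≤ 3 e^{ξ − C/2}/n. -/
open Real MeasureTheory Filter

/-! With `ρ := R - ξ` and `φ` the angle, `cosh d = cosh (r_u - r_v) + sinh r_u sinh r_v (1 - cos φ)`
turns `d ≤ R` into `sinh ρ ^ 2 * (1 - cos φ) ≤ cosh R - 1`, so `1 - cos φ ≲ 2 e^{2ξ - R}`.
Jordan's inequality `1 - cos φ ≥ 2 φ² / π²` alone would only give the constant `π > 3`, but it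
shows `φ ≤ 1`, where the Taylor bound `1 - cos φ ≥ 43 φ² / 96` gives `φ² ≤ 9 e^{2ξ - R}`. -/

open Set

lemma coshDist_eq_cosh_sub_add (p q : ℝ × ℝ) :
    coshDist p q = cosh (p.1 - q.1) + sinh p.1 * sinh q.1 * (1 - cos (p.2 - q.2)) := by
  rw [coshDist, cosh_sub]
  ring

lemma sinh_sq_mul_one_sub_cos_le {p q : ℝ × ℝ} {ρ R : ℝ} (hρ : 0 ≤ ρ) (hp : ρ ≤ p.1)
    (hq : ρ ≤ q.1) (hpq : coshDist p q ≤ cosh R) :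
    sinh ρ ^ 2 * (1 - cos (p.2 - q.2)) ≤ cosh R - 1 := by
  have hsinh : sinh ρ ^ 2 ≤ sinh p.1 * sinh q.1 :=
    (sq ρ.sinh).trans_le <| mul_le_mul (sinh_le_sinh.2 hp) (sinh_le_sinh.2 hq)
      (sinh_nonneg_iff.2 hρ) (sinh_nonneg_iff.2 (hρ.trans hp))
  calc sinh ρ ^ 2 * (1 - cos (p.2 - q.2))
      ≤ sinh p.1 * sinh q.1 * (1 - cos (p.2 - q.2)) :=
        mul_le_mul_of_nonneg_right hsinh (sub_nonneg.2 (cos_le_one _))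
    _ ≤ cosh R - 1 := by
        linarith [coshDist_eq_cosh_sub_add p q, one_le_cosh (p.1 - q.1)]

lemma mul_sq_le_one_sub_cos {φ : ℝ} (hφ : |φ| ≤ 1) : 43 / 96 * φ ^ 2 ≤ 1 - cos φ := by
  have htaylor := (abs_le.1 (cos_bound hφ)).2
  have hsq : φ ^ 2 ≤ 1 := sq_le_one_iff_abs_le_one φ |>.2 hφ
  rw [Even.pow_abs ⟨2, rfl⟩] at htaylor
  nlinarith [sq_nonneg φ]

lemma mul_sq_le_of_one_sub_cos_le {φ ε : ℝ} (hφ : φ ∈ Icc 0 π) (h : 1 - cos φ ≤ ε)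
    (hε : ε ≤ 1 / 5) : 43 / 96 * φ ^ 2 ≤ ε := by
  have hjordan := cos_le_one_sub_mul_cos_sq (abs_le.2 ⟨by linarith [hφ.1, pi_pos], hφ.2⟩)
  have hle : φ ≤ 1 := by
    have h1 : 2 / π ^ 2 * φ ^ 2 ≤ 1 / 5 := by linarith
    rw [div_mul_eq_mul_div, div_le_iff₀ (by positivity)] at h1
    nlinarith [pi_lt_d2, pi_pos, hφ.1]
  exact (mul_sq_le_one_sub_cos (abs_le.2 ⟨by linarith [hφ.1], hle⟩)).trans h

lemma cos_angDist (a b : ℝ) : cos (angDist a b) = cos (a - b) := by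
  rcases min_choice |a - b| (2 * π - |a - b|) with h | h <;> rw [angDist, h]
  · exact cos_abs _
  · rw [cos_two_pi_sub, cos_abs]

lemma angDist_mem_Icc {a b : ℝ} (h : |a - b| ≤ 2 * π) : angDist a b ∈ Icc 0 π :=
  ⟨le_min (abs_nonneg _) (by linarith), min_le_iff.2 <|
    (le_total |a - b| π).imp id fun h' => by linarith⟩

lemma sq_mul_le_of_sub_one_sq_mul_one_sub_cos_le {φ x s : ℝ} (hs : 1 ≤ s) (hx : 18 * s ≤ x)
    (hφ : φ ∈ Icc 0 π) (h : (x - 1) ^ 2 * (1 - cos φ) ≤ 2 * x * s) : φ ^ 2 * x ≤ 9 * s := by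
  have hx₁ : 0 < (x - 1) ^ 2 := pow_pos (by linarith) 2
  have hφ_sq := mul_sq_le_of_one_sub_cos_le hφ (ε := 2 * x * s / (x - 1) ^ 2)
    (by rw [le_div_iff₀ hx₁]; linarith) (by rw [div_le_iff₀ hx₁]; nlinarith)
  rw [le_div_iff₀ hx₁] at hφ_sq
  have hx_sq : 192 * x ^ 2 ≤ 387 * (x - 1) ^ 2 := by nlinarith
  refine le_of_mul_le_mul_right ?_ (mul_pos (by norm_num : (0 : ℝ) < 43) hx₁)
  nlinarith [mul_le_mul_of_nonneg_left hx_sq (by linarith : (0 : ℝ) ≤ s)]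

lemma le_three_mul_exp_of_sinh_sq_mul_one_sub_cos_le {φ R ξ : ℝ} (hξ : 0 ≤ ξ)
    (hR : 2 * ξ + log 18 ≤ R) (hφ : φ ∈ Icc 0 π)
    (h : sinh (R - ξ) ^ 2 * (1 - cos φ) ≤ cosh R - 1) :
    φ ≤ 3 * exp (ξ - R / 2) := by
  have hρ : 0 ≤ R - ξ := by linarith [log_nonneg (by norm_num : (1 : ℝ) ≤ 18)]
  have hbound : (3 * exp (ξ - R / 2)) ^ 2 * exp (R - ξ) = 9 * exp ξ := by
    rw [mul_pow, mul_assoc, ← exp_nat_mul, ← exp_add]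
    push_cast
    ring_nf
  have hsinh : exp (R - ξ) - 1 ≤ 2 * sinh (R - ξ) := by
    rw [sinh_eq]
    linarith [exp_le_one_iff.2 (neg_nonpos.2 hρ)]
  have hcosh : 2 * (cosh R - 1) ≤ exp (R - ξ) * exp ξ := by
    rw [cosh_eq, ← exp_add, sub_add_cancel]
    linarith [exp_le_one_iff.2 (show -R ≤ 0 by linarith)]
  have hcos : (exp (R - ξ) - 1) ^ 2 * (1 - cos φ) ≤ 2 * exp (R - ξ) * exp ξ :=
    calc (exp (R - ξ) - 1) ^ 2 * (1 - cos φ) ≤ (2 * sinh (R - ξ)) ^ 2 * (1 - cos φ) :=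
          mul_le_mul_of_nonneg_right (pow_le_pow_left₀ (by linarith [one_le_exp hρ]) hsinh 2)
            (sub_nonneg.2 (cos_le_one φ))
      _ = 4 * (sinh (R - ξ) ^ 2 * (1 - cos φ)) := by ring
      _ ≤ 2 * exp (R - ξ) * exp ξ := by linarith
  have hx : 18 * exp ξ ≤ exp (R - ξ) := by
    rw [← exp_log (by norm_num : (0 : ℝ) < 18), ← exp_add]
    exact exp_le_exp.2 (by linarith)
  have hφ_sq := sq_mul_le_of_sub_one_sq_mul_one_sub_cos_le (one_le_exp hξ) hx hφ hcos
  rw [← hbound] at hφ_sq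
  exact (pow_le_pow_iff_left₀ hφ.1 (by positivity) two_ne_zero).1
    (le_of_mul_le_mul_right hφ_sq (exp_pos _))

lemma exp_Rn_div_two (C : ℝ) {n : ℕ} (hn : n ≠ 0) : exp (Rn C n / 2) = n * exp (C / 2) := by
  rw [Rn, show (2 * log n + C) / 2 = log n + C / 2 by ring, exp_add,
    exp_log (Nat.cast_pos.2 (Nat.pos_of_ne_zero hn))]

theorem angle_bound_boundary_general (C ξ : ℝ) (hξ : 0 < ξ) :
    ∃ n₀ : ℕ, ∀ n ≥ n₀, ∀ u v : ℝ × ℝ,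
      validPoint (Rn C n) u → validPoint (Rn C n) v →
      Rn C n - ξ < u.1 → Rn C n - ξ < v.1 →
      coshDist u v ≤ Real.cosh (Rn C n) →
      angDist u.2 v.2 ≤ 3 * Real.exp (ξ - C / 2) / n := by
  obtain ⟨n₀, hn₀⟩ :=
    eventually_atTop.1 ((tendsto_Rn_atTop C).eventually_ge_atTop (2 * ξ + log 18))
  refine ⟨max n₀ 1, fun n hn u v ⟨_, _, hu₀, hu₁⟩ ⟨_, _, hv₀, hv₁⟩ hru hrv huv => ?_⟩
  have hR := hn₀ n (le_of_max_le_left hn)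
  have hρ : 0 ≤ Rn C n - ξ := by linarith [log_nonneg (by norm_num : (1 : ℝ) ≤ 18)]
  have hθ : |u.2 - v.2| ≤ 2 * π := abs_le.2 ⟨by linarith, by linarith⟩
  have hcos := sinh_sq_mul_one_sub_cos_le hρ hru.le hrv.le huv
  rw [← cos_angDist] at hcos
  calc angDist u.2 v.2 ≤ 3 * exp (ξ - Rn C n / 2) :=
        le_three_mul_exp_of_sinh_sq_mul_one_sub_cos_le hξ.le hR (angDist_mem_Icc hθ) hcos
    _ = 3 * exp (ξ - C / 2) / n := by
        rw [exp_sub, exp_Rn_div_two C (by omega), exp_sub]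
        ring

/-- Deterministic: two points of radius larger than `R - ξ` at hyperbolic
distance at most `R` subtend an angle at most `3 e^{ξ - C/2}/n` at the origin. -/
theorem angle_bound_boundary (α C ξ : ℝ) (hα : 1/2 < α) (hα' : α < 1) (hξ : 0 < ξ) :
    ∃ n₀ : ℕ, ∀ n ≥ n₀, ∀ u v : ℝ × ℝ,
      validPoint (Rn C n) u → validPoint (Rn C n) v →
      Rn C n - ξ < u.1 → Rn C n - ξ < v.1 →
      coshDist u v ≤ Real.cosh (Rn C n) →
      angDist u.2 v.2 ≤ 3 * Real.exp (ξ - C / 2) / n :=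
  angle_bound_boundary_general C ξ hξ
end
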